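/- Let K be a field with char K ∉ {1,2,...,n}. Define H = {M ∈ Mat_n(K) : tr M = 0}. Then every K-subspace of H is a two-sided Mathieu subspace of Mat_n(K). -/

import Mathlib

/-!
If `tr (a ^ m) = 0` for all `m ≥ 1`, pass to an algebraic closure and decompose into generalized
eigenspaces: `tr (a ^ m) = ∑ μ, d_μ μ ^ m` with `d_μ` the dimension of the generalized
`μ`-eigenspace. Linear independence of the characters `m ↦ μ ^ m` forces `d_μ = 0` in `K` for every
`μ ≠ 0`, which the characteristic assumption rules out since `0 < d_μ ≤ n` whenever the eigenspace
is nonzero. So `a` is nilpotent, and `b * a ^ m * c = 0 ∈ M` for large `m`.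
-/

open Module

theorem Commute.isNilpotent_pow_sub_pow {R : Type*} [Ring R] {x y : R} (h : Commute x y)
    (hxy : IsNilpotent (x - y)) (m : ℕ) : IsNilpotent (x ^ m - y ^ m) := by
  rw [← h.geom_sum₂_mul m]
  refine Commute.isNilpotent_mul_left (Commute.sum_left _ _ _ fun i _ ↦ ?_) hxy
  exact (((Commute.refl x).sub_right h).pow_left i).mul_left
    ((h.symm.sub_right (Commute.refl y)).pow_left _)

theorem LinearMap.trace_eq_mul_finrank_of_isNilpotent_sub_algebraMap {K V : Type*} [Field K]
    [AddCommGroup V] [Module K V] [FiniteDimensional K V] {g : End K V} {μ : K}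
    (hg : IsNilpotent (g - algebraMap K (End K V) μ)) :
    trace K V g = μ * finrank K V := by
  rw [← trace_one, ← trace_comp_eq_mul_of_commute_of_isNilpotent μ (Commute.one_left g) hg,
    End.one_eq_id, id_comp]

theorem Finset.eq_zero_of_forall_sum_mul_pow_eq_zero {L : Type*} [Field L] {s : Finset L}
    {c : L → L} (h : ∀ m : ℕ, ∑ μ ∈ s, c μ * μ ^ m = 0) : ∀ μ ∈ s, c μ = 0 := by
  have hli : LinearIndependent L (fun μ : L ↦ (powersHom L μ : Multiplicative ℕ → L)) :=
    (linearIndependent_monoidHom (Multiplicative ℕ) L).comp _ (powersHom L).injective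
  refine linearIndependent_iff'.mp hli s c ?_
  ext m
  simpa using h m.toAdd

namespace Module.End

variable {K V : Type*} [Field K] [AddCommGroup V] [Module K V] [FiniteDimensional K V]

theorem trace_pow_restrict_maxGenEigenspace (f : End K V) (μ : K) (m : ℕ) :
    LinearMap.trace K (f.maxGenEigenspace μ)
      ((f ^ m).restrict (f.mapsTo_maxGenEigenspace_of_comm ((Commute.refl f).pow_right m) μ)) =
      μ ^ m * finrank K (f.maxGenEigenspace μ) := by
  have hf := f.mapsTo_maxGenEigenspace_of_comm (Commute.refl f) μ
  have hnil : IsNilpotent (f.restrict hf - algebraMap K _ μ) := by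
    convert f.isNilpotent_restrict_maxGenEigenspace_sub_algebraMap μ using 1
    ext
    rfl
  rw [← pow_restrict m hf]
  refine LinearMap.trace_eq_mul_finrank_of_isNilpotent_sub_algebraMap ?_
  rw [map_pow]
  exact (Algebra.commute_algebraMap_right μ _).isNilpotent_pow_sub_pow hnil m

theorem trace_pow_eq_sum_mul_finrank [IsAlgClosed K] (f : End K V) {s : Finset K}
    (hs : ∀ μ ∉ s, f.maxGenEigenspace μ = ⊥) (m : ℕ) :
    LinearMap.trace K V (f ^ m) = ∑ μ ∈ s, μ ^ m * finrank K (f.maxGenEigenspace μ) := by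
  classical
  have hfin : {μ | f.maxGenEigenspace μ ≠ ⊥}.Finite :=
    WellFoundedGT.finite_ne_bot_of_iSupIndep f.independent_maxGenEigenspace
  have hds := DirectSum.isInternal_submodule_of_iSupIndep_of_iSup_eq_top
    f.independent_maxGenEigenspace f.iSup_maxGenEigenspace_eq_top
  rw [LinearMap.trace_eq_sum_trace_restrict' hds hfin
    (fun μ ↦ f.mapsTo_maxGenEigenspace_of_comm ((Commute.refl f).pow_right m) μ),
    Finset.sum_congr rfl fun μ _ ↦ trace_pow_restrict_maxGenEigenspace f μ m]
  refine Finset.sum_subset ?_ ?_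
  · intro μ hμ
    by_contra h
    exact (hfin.mem_toFinset.mp hμ) (hs μ h)
  · intro μ _ hμ
    have hbot : f.maxGenEigenspace μ = ⊥ := by simpa using hμ
    rw [hbot, finrank_bot, Nat.cast_zero, mul_zero]

theorem isNilpotent_of_forall_maxGenEigenspace_eq_bot [IsAlgClosed K] (f : End K V)
    (h : ∀ μ ≠ 0, f.maxGenEigenspace μ = ⊥) : IsNilpotent f := by
  have htop : f.maxGenEigenspace 0 = ⊤ := by
    rw [eq_top_iff, ← f.iSup_maxGenEigenspace_eq_top]
    refine iSup_le fun μ ↦ ?_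
    rcases eq_or_ne μ 0 with rfl | hμ
    · exact le_rfl
    · exact (h μ hμ).trans_le bot_le
  refine ((LinearMap.charpoly_nilpotent_tfae f).out 2 0).mp fun x ↦ ?_
  obtain ⟨k, hk⟩ := (f.mem_maxGenEigenspace 0 x).mp (htop ▸ Submodule.mem_top)
  exact ⟨k, by simpa using hk⟩

theorem isNilpotent_of_trace_pow_eq_zero [IsAlgClosed K]
    (hchar : ∀ i ∈ Finset.Icc 1 (finrank K V), (i : K) ≠ 0) (f : End K V)
    (htr : ∀ m : ℕ, 1 ≤ m → LinearMap.trace K V (f ^ m) = 0) : IsNilpotent f := by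
  have hfin : {μ | f.maxGenEigenspace μ ≠ ⊥}.Finite :=
    WellFoundedGT.finite_ne_bot_of_iSupIndep f.independent_maxGenEigenspace
  refine f.isNilpotent_of_forall_maxGenEigenspace_eq_bot fun μ hμ ↦ ?_
  by_contra hne
  -- weighting by `μ` shifts the exponents, so that the traces for `m ≥ 1` give all moments `m ≥ 0`
  have hweights := Finset.eq_zero_of_forall_sum_mul_pow_eq_zero (s := hfin.toFinset)
      (c := fun μ ↦ μ * finrank K (f.maxGenEigenspace μ)) fun m ↦ by
    rw [← htr (m + 1) (by omega), trace_pow_eq_sum_mul_finrank f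
      (fun μ hμ ↦ not_not.mp (hfin.mem_toFinset.not.mp hμ))]
    exact Finset.sum_congr rfl fun μ _ ↦ by ring
  have hrank : (finrank K (f.maxGenEigenspace μ) : K) = 0 :=
    (mul_eq_zero.mp (hweights μ (hfin.mem_toFinset.mpr hne))).resolve_left hμ
  have hpos : 0 < finrank K (f.maxGenEigenspace μ) :=
    finrank_pos_iff.mpr (Submodule.nontrivial_iff_ne_bot.mpr hne)
  exact hchar _ (Finset.mem_Icc.mpr ⟨hpos, Submodule.finrank_le _⟩) hrank

end Module.End

theorem Matrix.isNilpotent_of_trace_pow_eq_zero {ι K : Type*} [Fintype ι] [DecidableEq ι]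
    [Field K] (hchar : ∀ i ∈ Finset.Icc 1 (Fintype.card ι), (i : K) ≠ 0) (A : Matrix ι ι K)
    (htr : ∀ m : ℕ, 1 ≤ m → (A ^ m).trace = 0) : IsNilpotent A := by
  let φ := (algebraMap K (AlgebraicClosure K)).mapMatrix (m := ι)
  rw [← IsNilpotent.map_iff (f := φ) (Matrix.map_injective (algebraMap K _).injective),
    ← Matrix.isNilpotent_toLin'_iff]
  refine Module.End.isNilpotent_of_trace_pow_eq_zero ?_ _ fun m hm ↦ ?_
  · rw [Module.finrank_fintype_fun_eq_card]
    intro i hi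
    rw [← map_natCast (algebraMap K (AlgebraicClosure K))]
    exact (map_ne_zero _).mpr (hchar i hi)
  · rw [← Matrix.toLin'_pow, Matrix.trace_toLin'_eq, ← map_pow]
    simp [φ, ← AddMonoidHom.map_trace, htr m hm]

theorem traceZero_subspace_is_mathieu {n : ℕ} {K : Type*} [Field K]
    (hchar : ∀ i ∈ Finset.Icc 1 n, (i : K) ≠ 0)
    (M : Submodule K (Matrix (Fin n) (Fin n) K))
    (htr : ∀ A ∈ M, Matrix.trace A = 0) :
    ∀ a b c : Matrix (Fin n) (Fin n) K,
      (∀ m : ℕ, 1 ≤ m → a ^ m ∈ M) → ∃ N : ℕ, ∀ m ≥ N, b * a ^ m * c ∈ M := by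
  intro a b c ha
  obtain ⟨k, hk⟩ := Matrix.isNilpotent_of_trace_pow_eq_zero (by simpa using hchar) a
    fun m hm ↦ htr _ (ha m hm)
  exact ⟨k, fun m hm ↦ by simp [pow_eq_zero_of_le hm hk, M.zero_mem]⟩
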